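/- arXiv:1801.07541 — 6 statements merged into one kernel-verified Lean document; each statement's English description precedes it below -/
import Mathlib

section
/- Let f : (0,1) → (0,1) be a function with f(x) < x for all x, let ε ∈ (0,1) with 1/ε ∈ ℕ, and let k be a positive integer; set T = 2(1/ε)^k. Let W and OPT be positive integers and let R be a finite family of rectangles with w_i ≤ W, h_i ≤ OPT for all i and total area a(R) ≤ W·OPT. Define y_1 = ε and y_{j+1} = f(y_j) for j = 1,…,T, and x_j = ε·y_j/12. For each j ∈ {1,…,T} let W_j = {R_i ∈ R : x_{j+1}·W ≤ w_i < x_j·W} and H_j = {R_i ∈ R : y_{j+1}·OPT ≤ h_i < y_j·OPT}. Then there exists j̄ ∈ {1,…,T} such that a(W_{j̄}) + a(H_{j̄}) ≤ ε^k·OPT·W; in particular a(W_{j̄} ∪ H_{j̄}) ≤ ε^k·OPT·W. -/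
/-! Since `y` is decreasing on `{1, …, T+1}`, the width bands `[x_{j+1} W, x_j W)` for
`j = 1, …, T` are pairwise disjoint, and so are the height bands; hence all `T` bands together
carry at most `2 · a(R) ≤ 2 · W · OPT`. As `T · ε^k = 2`, averaging over `j` gives an index
whose two bands carry at most `ε^k · OPT · W`. -/

open scoped Classical

open Finset

section Recurrence

variable {α : Type*} {S : Set α} {f : α → α} {y : ℕ → α} {a n : ℕ}

lemma mem_of_recurrence (hS : Set.MapsTo f S S) (ha : y a ∈ S)
    (hy : ∀ j, a ≤ j → j ≤ n → y (j + 1) = f (y j)) : ∀ j ∈ Set.Icc a (n + 1), y j ∈ S := by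
  rintro j ⟨haj, hjn⟩
  induction j, haj using Nat.le_induction with
  | base => exact ha
  | succ j haj ih => rw [hy j haj (by omega)]; exact hS (ih (by omega))

lemma antitoneOn_of_recurrence [Preorder α] (hS : Set.MapsTo f S S) (hf : ∀ t ∈ S, f t ≤ t)
    (ha : y a ∈ S) (hy : ∀ j, a ≤ j → j ≤ n → y (j + 1) = f (y j)) :
    AntitoneOn y (Set.Icc a (n + 1)) := by
  refine antitoneOn_of_add_one_le Set.ordConnected_Icc fun j _ hj hj1 => ?_
  rw [hy j hj.1 (by simpa using hj1.2)]
  exact hf _ (mem_of_recurrence hS ha hy j hj)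

end Recurrence

lemma pairwiseDisjoint_filter_Ico_of_antitoneOn {ι β : Type*} [Fintype ι] [Preorder β]
    {b : ℕ → β} {a n : ℕ} (hb : AntitoneOn b (Set.Icc a (n + 1))) (v : ι → β) :
    (↑(Icc a n) : Set ℕ).PairwiseDisjoint
      fun j => univ.filter fun i => b (j + 1) ≤ v i ∧ v i < b j := by
  intro j hj j' hj' hne
  wlog hlt : j < j' generalizing j j'
  · exact (this hj' hj hne.symm (by omega)).symm
  simp only [coe_Icc, Set.mem_Icc] at hj hj'
  have hb' : b j' ≤ b (j + 1) := hb ⟨by omega, by omega⟩ ⟨by omega, by omega⟩ hlt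
  exact disjoint_filter.2 fun i _ hi hi' => lt_irrefl _ ((hi'.2.trans_le hb').trans_le hi.1)

section Sums

variable {ι M : Type*} [AddCommMonoid M] [PartialOrder M] [IsOrderedAddMonoid M] {g : ι → M}

lemma sum_sum_le_sum_of_pairwiseDisjoint {κ : Type*} [Fintype ι] (hg : 0 ≤ g) {s : Finset κ}
    {A : κ → Finset ι} (hA : (↑s : Set κ).PairwiseDisjoint A) :
    ∑ j ∈ s, ∑ i ∈ A j, g i ≤ ∑ i, g i := by
  rw [← sum_biUnion hA]
  exact sum_le_univ_sum_of_nonneg hg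

lemma sum_filter_or_le (hg : 0 ≤ g) (s : Finset ι) (P Q : ι → Prop) [DecidablePred P]
    [DecidablePred Q] :
    ∑ i ∈ s.filter (fun i => P i ∨ Q i), g i ≤ ∑ i ∈ s.filter P, g i + ∑ i ∈ s.filter Q, g i := by
  rw [filter_or, ← sum_union_inter]
  exact le_add_of_nonneg_right (sum_nonneg fun i _ => hg i)

end Sums

theorem medium_rectangles_small_area_general
    (f : ℝ → ℝ) (hf : ∀ t ∈ Set.Ioo (0 : ℝ) 1, f t ∈ Set.Ioo (0 : ℝ) 1 ∧ f t < t)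
    (ε : ℝ) (hε : ε ∈ Set.Ioo (0 : ℝ) 1)
    (m : ℕ) (hm : (m : ℝ) = 1 / ε)
    (k : ℕ)
    (T : ℕ) (hT : T = 2 * m ^ k)
    (W OPT : ℕ)
    (ι : Type*) [Fintype ι] (w h : ι → ℕ)
    (harea : (∑ i, (w i : ℝ) * h i) ≤ (W : ℝ) * OPT)
    (y : ℕ → ℝ) (hy1 : y 1 = ε)
    (hyrec : ∀ j, 1 ≤ j → j ≤ T → y (j + 1) = f (y j))
    (x : ℕ → ℝ) (hx : ∀ j, x j = ε * y j / 12) :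
    ∃ j, 1 ≤ j ∧ j ≤ T ∧
      ((∑ i ∈ Finset.univ.filter
          (fun i => x (j + 1) * W ≤ (w i : ℝ) ∧ (w i : ℝ) < x j * W), (w i : ℝ) * h i)
        + (∑ i ∈ Finset.univ.filter
          (fun i => y (j + 1) * OPT ≤ (h i : ℝ) ∧ (h i : ℝ) < y j * OPT), (w i : ℝ) * h i)
        ≤ ε ^ k * OPT * W) ∧
      ((∑ i ∈ Finset.univ.filter
          (fun i => (x (j + 1) * W ≤ (w i : ℝ) ∧ (w i : ℝ) < x j * W) ∨
            (y (j + 1) * OPT ≤ (h i : ℝ) ∧ (h i : ℝ) < y j * OPT)), (w i : ℝ) * h i)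
        ≤ ε ^ k * OPT * W) := by
  have hmε : (m : ℝ) * ε = 1 := by rw [hm]; field_simp [hε.1.ne']
  have hT0 : 0 < T := by
    have : m ≠ 0 := by rintro rfl; simp at hmε
    rw [hT]; positivity
  have hy : AntitoneOn y (Set.Icc 1 (T + 1)) :=
    antitoneOn_of_recurrence (fun t ht => (hf t ht).1) (fun t ht => (hf t ht).2.le)
      (hy1 ▸ hε) hyrec
  have hxW : AntitoneOn (fun j => x j * W) (Set.Icc 1 (T + 1)) := fun j hj j' hj' hjj' => by
    simp only [hx]
    have := hε.1
    gcongr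
    exact hy hj hj' hjj'
  have hyOPT : AntitoneOn (fun j => y j * OPT) (Set.Icc 1 (T + 1)) := fun j hj j' hj' hjj' =>
    mul_le_mul_of_nonneg_right (hy hj hj' hjj') (Nat.cast_nonneg _)
  have hg : 0 ≤ fun i => (w i : ℝ) * h i := fun i => by positivity
  have hwidths := sum_sum_le_sum_of_pairwiseDisjoint hg
    (pairwiseDisjoint_filter_Ico_of_antitoneOn hxW fun i => (w i : ℝ))
  have hheights := sum_sum_le_sum_of_pairwiseDisjoint hg
    (pairwiseDisjoint_filter_Ico_of_antitoneOn hyOPT fun i => (h i : ℝ))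
  have hbudget : (T : ℝ) * (ε ^ k * OPT * W) = 2 * (W * OPT) := by
    rw [hT]; push_cast
    linear_combination (2 * (OPT : ℝ) * W) * (congrArg (· ^ k) hmε).trans (one_pow k)
  obtain ⟨j, hj, hjle⟩ := exists_le_of_sum_le (nonempty_Icc.2 hT0) (g := fun _ => ε ^ k * OPT * W)
    (f := fun j =>
      (∑ i ∈ univ.filter fun i => x (j + 1) * W ≤ (w i : ℝ) ∧ (w i : ℝ) < x j * W, (w i : ℝ) * h i)
      + ∑ i ∈ univ.filter fun i => y (j + 1) * OPT ≤ (h i : ℝ) ∧ (h i : ℝ) < y j * OPT,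
          (w i : ℝ) * h i)
    (by rw [sum_add_distrib, sum_const, Nat.card_Icc, Nat.add_sub_cancel, nsmul_eq_mul, hbudget]
        linarith)
  exact ⟨j, (mem_Icc.1 hj).1, (mem_Icc.1 hj).2, hjle, (sum_filter_or_le hg _ _ _).trans hjle⟩

/-- Parameter-selection lemma (Lemma 2.1): there is an index `j̄ ∈ {1,…,T}` such that the
rectangles whose widths lie in `[x_{j̄+1}·W, x_{j̄}·W)` or whose heights lie in
`[y_{j̄+1}·OPT, y_{j̄}·OPT)` have total area at most `ε^k·OPT·W`. -/
theorem medium_rectangles_small_area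
    (f : ℝ → ℝ) (hf : ∀ t ∈ Set.Ioo (0 : ℝ) 1, f t ∈ Set.Ioo (0 : ℝ) 1 ∧ f t < t)
    (ε : ℝ) (hε : ε ∈ Set.Ioo (0 : ℝ) 1)
    (m : ℕ) (hm : (m : ℝ) = 1 / ε)
    (k : ℕ) (hk : 1 ≤ k)
    (T : ℕ) (hT : T = 2 * m ^ k)
    (W OPT : ℕ) (hW : 0 < W) (hOPT : 0 < OPT)
    (ι : Type*) [Fintype ι] (w h : ι → ℕ)
    (hwh : ∀ i, 0 < w i ∧ w i ≤ W ∧ 0 < h i ∧ h i ≤ OPT)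
    (harea : (∑ i, (w i : ℝ) * h i) ≤ (W : ℝ) * OPT)
    (y : ℕ → ℝ) (hy1 : y 1 = ε)
    (hyrec : ∀ j, 1 ≤ j → j ≤ T → y (j + 1) = f (y j))
    (x : ℕ → ℝ) (hx : ∀ j, x j = ε * y j / 12) :
    ∃ j, 1 ≤ j ∧ j ≤ T ∧
      ((∑ i ∈ Finset.univ.filter
          (fun i => x (j + 1) * W ≤ (w i : ℝ) ∧ (w i : ℝ) < x j * W), (w i : ℝ) * h i)
        + (∑ i ∈ Finset.univ.filter
          (fun i => y (j + 1) * OPT ≤ (h i : ℝ) ∧ (h i : ℝ) < y j * OPT), (w i : ℝ) * h i)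
        ≤ ε ^ k * OPT * W) ∧
      ((∑ i ∈ Finset.univ.filter
          (fun i => (x (j + 1) * W ≤ (w i : ℝ) ∧ (w i : ℝ) < x j * W) ∨
            (y (j + 1) * OPT ≤ (h i : ℝ) ∧ (h i : ℝ) < y j * OPT)), (w i : ℝ) * h i)
        ≤ ε ^ k * OPT * W) :=
  medium_rectangles_small_area_general f hf ε hε m hm k T hT W OPT ι w h harea y hy1 hyrec x hx
end

section
/- Let W be a positive integer and let R be a finite family of rectangles, each of width w_i ≤ W and positive integer height h_i. Then there exists a feasible packing of all rectangles of R into the strip of width W whose height max_i (y_i + h_i) is at most h_max(R) + 2·a(R)/W. -/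
open scoped Classical

/-- Open axis-aligned rectangles `(x₁, x₁+w₁) × (y₁, y₁+h₁)` and `(x₂, x₂+w₂) × (y₂, y₂+h₂)`
are disjoint. -/
def RectDisjoint (x₁ y₁ w₁ h₁ x₂ y₂ w₂ h₂ : ℕ) : Prop :=
  x₁ + w₁ ≤ x₂ ∨ x₂ + w₂ ≤ x₁ ∨ y₁ + h₁ ≤ y₂ ∨ y₂ + h₂ ≤ y₁

/-! Sort the rectangles by non-increasing height and place them left to right on shelves,
opening a new shelf, as tall as its first rectangle, on top of the current one whenever the next
rectangle does not fit. A closed shelf together with the first rectangle of the next shelf is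
wider than `W`, and all of them are at least as tall as that next shelf, whose height is
therefore at most (area of the closed shelf + area of that rectangle) / `W`. Summing, the shelves
above the first one have total height at most `2·a(R)/W`, as every rectangle is counted at most
twice; the first shelf has height `h_max`. -/

theorem RectDisjoint.symm {x₁ y₁ w₁ h₁ x₂ y₂ w₂ h₂ : ℕ}
    (hd : RectDisjoint x₁ y₁ w₁ h₁ x₂ y₂ w₂ h₂) : RectDisjoint x₂ y₂ w₂ h₂ x₁ y₁ w₁ h₁ := by
  unfold RectDisjoint at *
  tauto

theorem List.exists_perm_map_pairwise_ge {α : Type*} (l : List α) (f : α → ℕ) :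
    ∃ l' : List α, l'.Perm l ∧ (l'.map f).Pairwise (· ≥ ·) := by
  refine ⟨l.mergeSort (fun i j => f j ≤ f i), List.mergeSort_perm _ _, ?_⟩
  have hsorted := List.pairwise_mergeSort (le := fun i j => decide (f j ≤ f i))
    (fun a b c hab hbc => by simp only [decide_eq_true_eq] at *; omega)
    (fun a b => by simp only [Bool.or_eq_true, decide_eq_true_eq]; omega) l
  exact List.pairwise_map.2 (hsorted.imp of_decide_eq_true)

theorem natCast_le_add_div_of_mul_le {W a b c : ℕ} (hW : 0 < W) (h : W * a ≤ W * b + c) :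
    (a : ℝ) ≤ b + c / W := by
  have hW' : (0 : ℝ) < W := by exact_mod_cast hW
  rw [← sub_le_iff_le_add', le_div_iff₀ hW']
  have : (W : ℝ) * a ≤ W * b + c := by exact_mod_cast h
  linarith

section NFDH

variable {ι : Type*} [DecidableEq ι] (W : ℕ) (w h : ι → ℕ)

/-- Next-Fit placement of the rectangles of a list: `x` is the cursor on the current shelf, whose
bottom is at height `y` and whose height is `s`. A rectangle that does not fit to the right of the
cursor opens a new shelf of its own height on top of the current one. -/
def nfdhPlace : List ι → ℕ → ℕ → ℕ → ι → ℕ × ℕ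
  | [], _, _, _ => fun _ => (0, 0)
  | i :: l, x, y, s =>
    if x + w i ≤ W then Function.update (nfdhPlace l (x + w i) y s) i (x, y)
    else Function.update (nfdhPlace l (w i) (y + s) (h i)) i (0, y + s)

theorem nfdhPlace_fst_add_le {l : List ι} (hw : ∀ i ∈ l, w i ≤ W) (x y s : ℕ) :
    ∀ j ∈ l, (nfdhPlace W w h l x y s j).1 + w j ≤ W := by
  induction l generalizing x y s with
  | nil => simp
  | cons i l ih =>
    intro j hj
    have ih' := ih (fun k hk => hw k (List.mem_cons_of_mem i hk))
    by_cases hji : j = i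
    · subst hji
      unfold nfdhPlace
      split_ifs with hfit <;> simp [hfit, hw j (List.mem_cons_self)]
    · have hjl : j ∈ l := (List.mem_cons.1 hj).resolve_left hji
      unfold nfdhPlace
      split_ifs <;> simp only [Function.update_of_ne hji] <;> exact ih' _ _ _ j hjl

theorem nfdhPlace_after_cursor {l : List ι} (x y s : ℕ) :
    ∀ j ∈ l, ((nfdhPlace W w h l x y s j).2 = y ∧ x ≤ (nfdhPlace W w h l x y s j).1) ∨
      y + s ≤ (nfdhPlace W w h l x y s j).2 := by
  induction l generalizing x y s with
  | nil => simp
  | cons i l ih =>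
    intro j hj
    by_cases hji : j = i
    · subst hji
      unfold nfdhPlace
      split_ifs <;> simp
    · have hjl : j ∈ l := (List.mem_cons.1 hj).resolve_left hji
      unfold nfdhPlace
      split_ifs
      · simp only [Function.update_of_ne hji]
        have := ih (x + w i) y s j hjl
        omega
      · simp only [Function.update_of_ne hji]
        have := ih (w i) (y + s) (h i) j hjl
        omega

theorem nfdhPlace_rectDisjoint {l : List ι} {s : ℕ} (hl : (s :: l.map h).Pairwise (· ≥ ·))
    (x y : ℕ) : ∀ j ∈ l, ∀ k ∈ l, j ≠ k →
      RectDisjoint (nfdhPlace W w h l x y s j).1 (nfdhPlace W w h l x y s j).2 (w j) (h j)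
        (nfdhPlace W w h l x y s k).1 (nfdhPlace W w h l x y s k).2 (w k) (h k) := by
  induction l generalizing x y s with
  | nil => simp
  | cons i l ih =>
    have his : h i ≤ s := List.rel_of_pairwise_cons hl (by simp)
    have hl' : (h i :: l.map h).Pairwise (· ≥ ·) := by simpa using hl.of_cons
    have hls : (s :: l.map h).Pairwise (· ≥ ·) := hl.sublist (by simp)
    set p := nfdhPlace W w h (i :: l) x y s
    suffices hfirst : ∀ k ∈ i :: l, k ≠ i →
        RectDisjoint (p i).1 (p i).2 (w i) (h i) (p k).1 (p k).2 (w k) (h k) by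
      intro j hj k hk hjk
      by_cases hji : j = i
      · subst hji; exact hfirst k hk (Ne.symm hjk)
      by_cases hki : k = i
      · subst hki; exact (hfirst j hj hjk).symm
      have hjl : j ∈ l := (List.mem_cons.1 hj).resolve_left hji
      have hkl : k ∈ l := (List.mem_cons.1 hk).resolve_left hki
      simp only [p, nfdhPlace]
      split_ifs
      · simpa only [Function.update_of_ne hji, Function.update_of_ne hki]
          using ih hls (x + w i) y j hjl k hkl hjk
      · simpa only [Function.update_of_ne hji, Function.update_of_ne hki]
          using ih hl' (w i) (y + s) j hjl k hkl hjk
    intro k hk hki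
    have hkl : k ∈ l := (List.mem_cons.1 hk).resolve_left hki
    simp only [p, nfdhPlace, RectDisjoint]
    split_ifs
    · simp only [Function.update_self, Function.update_of_ne hki]
      have := nfdhPlace_after_cursor W w h (x + w i) y s k hkl
      omega
    · simp only [Function.update_self, Function.update_of_ne hki]
      have := nfdhPlace_after_cursor W w h (w i) (y + s) (h i) k hkl
      omega

/- `x * t` pays for the filled part of the current shelf: when rectangle `i` opens a new shelf,
`W < x + w i`, so that shelf costs `W * h i ≤ x * t + w i * h i`. -/
theorem nfdhPlace_height_le {l : List ι} {s t : ℕ} (hl : (s :: l.map h).Pairwise (· ≥ ·))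
    (ht : ∀ j ∈ l, h j ≤ t) (x y : ℕ) :
    ∀ j ∈ l, W * ((nfdhPlace W w h l x y s j).2 + h j) ≤
      W * (y + s) + 2 * (l.map fun j => w j * h j).sum + x * t := by
  induction l generalizing x y s t with
  | nil => simp
  | cons i l ih =>
    intro j hj
    have his : h i ≤ s := List.rel_of_pairwise_cons hl (by simp)
    have hit : h i ≤ t := ht i (by simp)
    have hl' : (h i :: l.map h).Pairwise (· ≥ ·) := by simpa using hl.of_cons
    have hls : (s :: l.map h).Pairwise (· ≥ ·) := hl.sublist (by simp)
    have hli : ∀ k ∈ l, h k ≤ h i := by simpa using (List.pairwise_cons.1 hl').1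
    have hxt : x * h i ≤ x * t := Nat.mul_le_mul_left x hit
    simp only [nfdhPlace, List.map_cons, List.sum_cons]
    split_ifs with hfit
    · by_cases hji : j = i
      · subst j
        have : W * (y + h i) ≤ W * (y + s) := Nat.mul_le_mul_left W (by omega)
        simp only [Function.update_self]
        omega
      have := ih hls hli (x + w i) y j ((List.mem_cons.1 hj).resolve_left hji)
      simp only [Function.update_of_ne hji]
      linarith [Nat.zero_le (w i * h i), Nat.zero_le (l.map fun j => w j * h j).sum]
    · have hWi : W * h i ≤ (x + w i) * h i := Nat.mul_le_mul_right _ (by omega)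
      by_cases hji : j = i
      · subst j
        simp only [Function.update_self]
        linarith [Nat.zero_le (w i * h i), Nat.zero_le (l.map fun j => w j * h j).sum]
      have := ih hl' hli (w i) (y + s) j ((List.mem_cons.1 hj).resolve_left hji)
      simp only [Function.update_of_ne hji]
      linarith [Nat.zero_le (w i * h i), Nat.zero_le (l.map fun j => w j * h j).sum]

end NFDH

theorem nfdh_strip_packing_general
    (W : ℕ) (hW : 0 < W)
    (ι : Type*) [Fintype ι] (w h : ι → ℕ)
    (hwW : ∀ i, w i ≤ W) :
    ∃ x y : ι → ℕ,
      (∀ i, x i + w i ≤ W) ∧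
      (Pairwise fun i j =>
        RectDisjoint (x i) (y i) (w i) (h i) (x j) (y j) (w j) (h j)) ∧
      (∀ i, ((y i + h i : ℕ) : ℝ) ≤
        ((Finset.univ.sup h : ℕ) : ℝ) + 2 * (∑ i, (w i : ℝ) * h i) / W) := by
  obtain ⟨l, hperm, hsorted⟩ := List.exists_perm_map_pairwise_ge Finset.univ.toList h
  have hmem (i : ι) : i ∈ l := hperm.mem_iff.2 (Finset.mem_toList.2 (Finset.mem_univ i))
  have hsup (i : ι) : h i ≤ Finset.univ.sup h := Finset.le_sup (Finset.mem_univ i)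
  have hl : (Finset.univ.sup h :: l.map h).Pairwise (· ≥ ·) :=
    List.pairwise_cons.2 ⟨by simpa using fun i _ => hsup i, hsorted⟩
  have harea : (l.map fun i => w i * h i).sum = ∑ i, w i * h i := by
    rw [(hperm.map _).sum_eq, Finset.sum_map_toList]
  set p := nfdhPlace W w h l 0 0 (Finset.univ.sup h)
  refine ⟨fun i => (p i).1, fun i => (p i).2,
    fun i => nfdhPlace_fst_add_le W w h (fun i _ => hwW i) 0 0 _ i (hmem i),
    fun i j hij => nfdhPlace_rectDisjoint W w h hl 0 0 i (hmem i) j (hmem j) hij, fun i => ?_⟩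
  have hheight := nfdhPlace_height_le W w h hl (fun i _ => hsup i) 0 0 i (hmem i)
  rw [harea, zero_add, zero_mul, add_zero] at hheight
  exact_mod_cast natCast_le_add_div_of_mul_le hW hheight

/-- NFDH guarantee for strip packing (Lemma 2.2): every family of rectangles of width at
most `W` can be feasibly packed into the strip of width `W` with height at most
`h_max + 2·a(R)/W`. -/
theorem nfdh_strip_packing
    (W : ℕ) (hW : 0 < W)
    (ι : Type*) [Fintype ι] (w h : ι → ℕ)
    (hpos : ∀ i, 0 < w i ∧ 0 < h i) (hwW : ∀ i, w i ≤ W) :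
    ∃ x y : ι → ℕ,
      (∀ i, x i + w i ≤ W) ∧
      (Pairwise fun i j =>
        RectDisjoint (x i) (y i) (w i) (h i) (x j) (y j) (w j) (h j)) ∧
      (∀ i, ((y i + h i : ℕ) : ℝ) ≤
        ((Finset.univ.sup h : ℕ) : ℝ) + 2 * (∑ i, (w i : ℝ) * h i) / W) :=
  nfdh_strip_packing_general W hW ι w h hwW
end

section
/- Let ε ∈ (0,1), let 0 < δ_h ≤ ε, set γ = ε·δ_h/2, and let W, OPT be positive integers with γ·OPT ∈ ℕ. Suppose the finite family R of rectangles admits a feasible packing into [0,W]×[0,OPT]. For each rectangle R_i with h_i ≥ δ_h·OPT, let its rounded height be h_i' = γ·OPT·⌈h_i/(γ·OPT)⌉; all other rectangles keep their heights. Then there exists a feasible packing of the rounded family into [0,W]×[0,OPT'] for some OPT' ≤ (1+ε)·OPT such that every rectangle with h_i ≥ δ_h·OPT keeps the same x-coordinate as in the given packing and has a y-coordinate that is an integer multiple of γ·OPT. -/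
/-!
Stretch the packing vertically by `F t = t + ⌊ε t⌋`: each rectangle is placed with its bottom
edge at or above `F y` and its top edge at or below `F (y + h)`, so a rectangle that lay below
another still does, and the new height is `F OPT ≤ (1 + ε) OPT`. A rectangle of height
`h ≥ δ_h·OPT` gains room `ε h ≥ 2 γ·OPT`, which pays for rounding both its bottom edge and its
height up to multiples of `γ·OPT`; every other rectangle keeps its height.
-/

open scoped Classical

/-- A feasible packing of the family of rectangles `(w i, h i)` at positions `(x i, y i)`
inside `[0,W]×[0,H]`. -/
def IsPacking {ι : Type*} (w h x y : ι → ℕ) (W H : ℕ) : Prop :=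
  (∀ i, x i + w i ≤ W ∧ y i + h i ≤ H) ∧
  Pairwise fun i j => RectDisjoint (x i) (y i) (w i) (h i) (x j) (y j) (w j) (h j)

theorem IsPacking.of_stretch {ι : Type*} {w h h' x y y' : ι → ℕ} {W H : ℕ} (F : ℕ → ℕ)
    (hp : IsPacking w h x y W H) (hle : ∀ j, F (y j) ≤ y' j)
    (htop : ∀ i T, y i + h i ≤ T → y' i + h' i ≤ F T) :
    IsPacking w h' x y' W (F H) := by
  obtain ⟨hcont, hdisj⟩ := hp
  refine ⟨fun i => ⟨(hcont i).1, htop i H (hcont i).2⟩, fun i j hij => ?_⟩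
  rcases hdisj hij with hx | hx | hy | hy
  · exact Or.inl hx
  · exact Or.inr (Or.inl hx)
  · exact Or.inr (Or.inr (Or.inl ((htop i (y j) hy).trans (hle j))))
  · exact Or.inr (Or.inr (Or.inr ((htop j (y i) hy).trans (hle i))))

theorem mul_ceilDiv_lt_add {g : ℕ} (hg : 0 < g) (n : ℕ) : g * (n ⌈/⌉ g) < n + g := by
  have := Nat.mul_div_le (n + g - 1) g
  rw [Nat.ceilDiv_eq_add_pred_div]
  omega

section Stretch

variable {ε : ℝ}

theorem stretch_le_mul (hε : 0 ≤ ε) (t : ℕ) : ((t + ⌊ε * t⌋₊ : ℕ) : ℝ) ≤ (1 + ε) * t := by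
  have := Nat.floor_le (mul_nonneg hε t.cast_nonneg)
  push_cast
  linarith

theorem stretch_add_le_stretch (hε : 0 ≤ ε) {y h T : ℕ} (hT : y + h ≤ T) :
    y + ⌊ε * y⌋₊ + h ≤ T + ⌊ε * T⌋₊ := by
  have : ⌊ε * y⌋₊ ≤ ⌊ε * T⌋₊ :=
    Nat.floor_le_floor (mul_le_mul_of_nonneg_left (by exact_mod_cast (by omega : y ≤ T)) hε)
  omega

theorem stretch_le_mul_ceilDiv {g : ℕ} (hg : 0 < g) (y : ℕ) :
    y + ⌊ε * y⌋₊ ≤ g * ((y + ⌈ε * y⌉₊) ⌈/⌉ g) :=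
  (Nat.add_le_add_left (Nat.floor_le_ceil _) y).trans (le_smul_ceilDiv hg)

theorem mul_ceilDiv_add_mul_ceilDiv_le_stretch (hε : 0 ≤ ε) {g y h T : ℕ} (hg : 0 < g)
    (hh : 2 * (g : ℝ) ≤ ε * h) (hT : y + h ≤ T) :
    g * ((y + ⌈ε * y⌉₊) ⌈/⌉ g) + g * (h ⌈/⌉ g) ≤ T + ⌊ε * T⌋₊ := by
  have hbot : (g * ((y + ⌈ε * y⌉₊) ⌈/⌉ g) : ℝ) + 1 ≤ y + ⌈ε * y⌉₊ + g := by
    exact_mod_cast mul_ceilDiv_lt_add hg _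
  have hheight : (g * (h ⌈/⌉ g) : ℝ) + 1 ≤ h + g := by
    exact_mod_cast mul_ceilDiv_lt_add hg h
  have hceil : (⌈ε * y⌉₊ : ℝ) < ε * y + 1 := Nat.ceil_lt_add_one (by positivity)
  have hfloor : ε * T < ⌊ε * T⌋₊ + 1 := Nat.lt_floor_add_one _
  have hyhT : ε * (y + h) ≤ ε * T :=
    mul_le_mul_of_nonneg_left (by exact_mod_cast hT) hε
  have hyhT' : (y + h : ℝ) ≤ T := by exact_mod_cast hT
  have : (g * ((y + ⌈ε * y⌉₊) ⌈/⌉ g) + g * (h ⌈/⌉ g) : ℝ) < T + ⌊ε * T⌋₊ + 1 := by linarith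
  exact Nat.lt_add_one_iff.mp (by exact_mod_cast this)

end Stretch

theorem height_rounding_general
    (ε δh : ℝ) (hε : ε ∈ Set.Ioo (0 : ℝ) 1)
    (W OPT : ℕ)
    (g : ℕ) (hg : 0 < g) (hgval : (g : ℝ) = ε * δh / 2 * OPT)
    (ι : Type*) (w h : ι → ℕ)
    (x y : ι → ℕ) (hpack : IsPacking w h x y W OPT) :
    ∃ OPT' : ℕ, (OPT' : ℝ) ≤ (1 + ε) * OPT ∧
      ∃ y' : ι → ℕ,
        IsPacking w
          (fun i => if δh * OPT ≤ (h i : ℝ) then g * ((h i + g - 1) / g) else h i)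
          x y' W OPT' ∧
        ∀ i, δh * OPT ≤ (h i : ℝ) → g ∣ y' i := by
  have hε0 : 0 ≤ ε := hε.1.le
  have hroom : ∀ i, δh * OPT ≤ (h i : ℝ) → 2 * (g : ℝ) ≤ ε * h i := fun i hi => by
    rw [hgval]
    nlinarith [mul_le_mul_of_nonneg_left hi hε0]
  -- `n ⌈/⌉ g` on `ℕ` is by definition `(n + g - 1) / g`, the rounding in the statement.
  refine ⟨OPT + ⌊ε * OPT⌋₊, stretch_le_mul hε0 OPT,
    fun i => if δh * OPT ≤ (h i : ℝ) then g * ((y i + ⌈ε * y i⌉₊) ⌈/⌉ g)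
      else y i + ⌊ε * y i⌋₊,
    hpack.of_stretch (fun t => t + ⌊ε * t⌋₊) (fun j => ?_) (fun i T hT => ?_),
    fun i hi => by simp only [if_pos hi, dvd_mul_right]⟩
  · split_ifs
    exacts [stretch_le_mul_ceilDiv hg _, le_rfl]
  · split_ifs with hi
    · exact mul_ceilDiv_add_mul_ceilDiv_le_stretch hε0 hg (hroom i hi) hT
    · exact stretch_add_le_stretch hε0 hT

/-- Height rounding lemma (Lemma 2.5, Nadiradze–Wiese): given a feasible packing into
`[0,W]×[0,OPT]`, rounding the height of every rectangle with `h_i ≥ δ_h·OPT` up to the next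
multiple of `γ·OPT` (where `γ = ε·δ_h/2` and `g = γ·OPT ∈ ℕ`) admits a feasible packing of
height `OPT' ≤ (1+ε)·OPT` in which those rectangles keep their `x`-coordinates and get
`y`-coordinates that are multiples of `γ·OPT`. -/
theorem height_rounding
    (ε δh : ℝ) (hε : ε ∈ Set.Ioo (0 : ℝ) 1) (hδh : 0 < δh) (hδhε : δh ≤ ε)
    (W OPT : ℕ) (hW : 0 < W) (hOPT : 0 < OPT)
    (g : ℕ) (hg : 0 < g) (hgval : (g : ℝ) = ε * δh / 2 * OPT)
    (ι : Type*) [Fintype ι] (w h : ι → ℕ) (hpos : ∀ i, 0 < w i ∧ 0 < h i)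
    (x y : ι → ℕ) (hpack : IsPacking w h x y W OPT) :
    ∃ OPT' : ℕ, (OPT' : ℝ) ≤ (1 + ε) * OPT ∧
      ∃ y' : ι → ℕ,
        IsPacking w
          (fun i => if δh * OPT ≤ (h i : ℝ) then g * ((h i + g - 1) / g) else h i)
          x y' W OPT' ∧
        ∀ i, δh * OPT ≤ (h i : ℝ) → g ∣ y' i :=
  height_rounding_general ε δh hε W OPT g hg hgval ι w h x y hpack
end

section
/- Let w̄ be a positive integer, h̄ > 0 a real number, and let γ, ε, α be reals with 0 < γ ≤ ε < α < 1/2. Let f, g : {1,…,w̄} → ℝ_{≥0} satisfy: (i) ∑_{i=1}^{w̄} f(i) = ∑_{i=1}^{w̄} g(i); (ii) g(i) ≤ (1 − 2α/(1+ε))·h̄ for every i; and (iii) f(i) − g(i) ≥ γ·h̄/(1+ε) for every i with g(i) < f(i). Then the set G = {i : g(i) ≥ f(i)} satisfies |G| ≥ (γ/(1+ε−2α+γ))·w̄, and consequently |G| ≥ γ·w̄. -/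
/-! Since `f` and `g` have the same total, the excess `∑ (f - g)` over the indices where `g < f`
equals the excess `∑ (g - f)` over the set `G` where `f ≤ g`. Each index of the first kind
contributes at least `γ·h̄/(1+ε)`, each index of `G` at most `(1 - 2α/(1+ε))·h̄` (as `f ≥ 0`),
so `(w̄ - |G|)·γ ≤ |G|·(1 + ε - 2α)`, which rearranges to the bound. -/

open Finset

section Counting

variable {ι M : Type*} [AddCommGroup M] [LinearOrder M]

theorem sum_filter_lt_sub_eq_sum_filter_le_sub {s : Finset ι} {f g : ι → M}
    (hsum : ∑ i ∈ s, f i = ∑ i ∈ s, g i) :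
    ∑ i ∈ s.filter (fun i => g i < f i), (f i - g i) =
      ∑ i ∈ s.filter (fun i => f i ≤ g i), (g i - f i) := by
  have htotal : ∑ i ∈ s, (f i - g i) = 0 := by
    rw [sum_sub_distrib, hsum, sub_self]
  rw [← sum_filter_add_sum_filter_not s (fun i => f i ≤ g i)] at htotal
  simp only [not_le] at htotal
  have hneg : ∑ i ∈ s.filter (fun i => f i ≤ g i), (g i - f i) =
      -∑ i ∈ s.filter (fun i => f i ≤ g i), (f i - g i) := by
    rw [← sum_neg_distrib]
    simp only [neg_sub]
  rw [hneg]
  exact eq_neg_of_add_eq_zero_right htotal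

theorem card_filter_lt_nsmul_le_card_filter_le_nsmul [IsOrderedAddMonoid M] {s : Finset ι}
    {f g : ι → M} {δ H : M}
    (hsum : ∑ i ∈ s, f i = ∑ i ∈ s, g i) (hf : ∀ i ∈ s, 0 ≤ f i) (hg : ∀ i ∈ s, g i ≤ H)
    (hgap : ∀ i ∈ s, g i < f i → δ ≤ f i - g i) :
    #(s.filter (fun i => g i < f i)) • δ ≤ #(s.filter (fun i => f i ≤ g i)) • H :=
  calc #(s.filter (fun i => g i < f i)) • δ
      ≤ ∑ i ∈ s.filter (fun i => g i < f i), (f i - g i) :=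
        card_nsmul_le_sum _ _ _ fun i hi => hgap i (mem_filter.1 hi).1 (mem_filter.1 hi).2
    _ = ∑ i ∈ s.filter (fun i => f i ≤ g i), (g i - f i) :=
        sum_filter_lt_sub_eq_sum_filter_le_sub hsum
    _ ≤ #(s.filter (fun i => f i ≤ g i)) • H :=
        sum_le_card_nsmul _ _ _ fun i hi =>
          (sub_le_self _ (hf i (mem_filter.1 hi).1)).trans (hg i (mem_filter.1 hi).1)

end Counting

theorem div_add_mul_le_of_sub_mul_le {K : Type*} [Field K] [LinearOrder K]
    [IsStrictOrderedRing K] {w k c γ : K} (hpos : 0 < c + γ) (h : (w - k) * γ ≤ k * c) :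
    γ / (c + γ) * w ≤ k := by
  rw [div_mul_eq_mul_div, div_le_iff₀ hpos]
  linarith

theorem repacking_counting_general
    (wbar : ℕ) (hbar : ℝ) (hhbar : 0 < hbar)
    (γ ε α : ℝ) (hγ : 0 < γ) (hγε : γ ≤ ε) (hεα : ε < α) (hα : α < 1 / 2)
    (f g : ℕ → ℝ)
    (hnn : ∀ i ∈ Finset.Icc 1 wbar, 0 ≤ f i ∧ 0 ≤ g i)
    (hsum : ∑ i ∈ Finset.Icc 1 wbar, f i = ∑ i ∈ Finset.Icc 1 wbar, g i)
    (hgub : ∀ i ∈ Finset.Icc 1 wbar, g i ≤ (1 - 2 * α / (1 + ε)) * hbar)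
    (hgap : ∀ i ∈ Finset.Icc 1 wbar, g i < f i → γ * hbar / (1 + ε) ≤ f i - g i) :
    γ / (1 + ε - 2 * α + γ) * wbar ≤
      (((Finset.Icc 1 wbar).filter (fun i => f i ≤ g i)).card : ℝ) ∧
    γ * wbar ≤ (((Finset.Icc 1 wbar).filter (fun i => f i ≤ g i)).card : ℝ) := by
  have hcard : (#((Icc 1 wbar).filter (fun i => g i < f i)) : ℝ) =
      wbar - #((Icc 1 wbar).filter (fun i => f i ≤ g i)) := by
    have := card_filter_add_card_filter_not (s := Icc 1 wbar) (fun i => f i ≤ g i)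
    simp only [not_le, Nat.card_Icc, add_tsub_cancel_right] at this
    rw [eq_sub_iff_add_eq, add_comm]
    exact_mod_cast this
  have hcount := card_filter_lt_nsmul_le_card_filter_le_nsmul hsum (fun i hi => (hnn i hi).1)
    hgub hgap
  rw [nsmul_eq_mul, nsmul_eq_mul, hcard] at hcount
  set k : ℝ := (#((Icc 1 wbar).filter (fun i => f i ≤ g i)) : ℝ)
  have hε : 0 < 1 + ε := by linarith
  have hbalance : (wbar - k) * γ ≤ k * (1 + ε - 2 * α) := by
    have hscale : 0 < hbar / (1 + ε) := by positivity
    refine le_of_mul_le_mul_right ?_ hscale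
    convert hcount using 1 <;> field_simp
  have hpos : 0 < 1 + ε - 2 * α + γ := by linarith
  have hfirst := div_add_mul_le_of_sub_mul_le hpos hbalance
  refine ⟨hfirst, le_trans ?_ hfirst⟩
  gcongr
  exact le_div_self hγ.le hpos (by linarith)

/-- Counting core of the Repacking Lemma (Lemma 3.1): if `f` and `g` are nonnegative on
`{1,…,w̄}` with equal sums, `g(i) ≤ (1 − 2α/(1+ε))·h̄` everywhere, and
`f(i) − g(i) ≥ γ·h̄/(1+ε)` whenever `g(i) < f(i)`, then the set `G = {i : g(i) ≥ f(i)}`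
has cardinality at least `(γ/(1+ε−2α+γ))·w̄ ≥ γ·w̄`. -/
theorem repacking_counting
    (wbar : ℕ) (hwbar : 0 < wbar) (hbar : ℝ) (hhbar : 0 < hbar)
    (γ ε α : ℝ) (hγ : 0 < γ) (hγε : γ ≤ ε) (hεα : ε < α) (hα : α < 1 / 2)
    (f g : ℕ → ℝ)
    (hnn : ∀ i ∈ Finset.Icc 1 wbar, 0 ≤ f i ∧ 0 ≤ g i)
    (hsum : ∑ i ∈ Finset.Icc 1 wbar, f i = ∑ i ∈ Finset.Icc 1 wbar, g i)
    (hgub : ∀ i ∈ Finset.Icc 1 wbar, g i ≤ (1 - 2 * α / (1 + ε)) * hbar)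
    (hgap : ∀ i ∈ Finset.Icc 1 wbar, g i < f i → γ * hbar / (1 + ε) ≤ f i - g i) :
    γ / (1 + ε - 2 * α + γ) * wbar ≤
      (((Finset.Icc 1 wbar).filter (fun i => f i ≤ g i)).card : ℝ) ∧
    γ * wbar ≤ (((Finset.Icc 1 wbar).filter (fun i => f i ≤ g i)).card : ℝ) :=
  repacking_counting_general wbar hbar hhbar γ ε α hγ hγε hεα hα f g hnn hsum hgub hgap
end

section
/- Let d, q be positive integers, let w̄ be a positive integer and h a positive real. Suppose a finite family of rectangles, each of width 1 and of height at least h/d, whose heights take at most q distinct values, is feasibly packed in the box [0,w̄]×[0,h]. Then there is a partition of the family into at most d·(q+1)^d groups, each group consisting of rectangles all of one common height, and a feasible packing of all the rectangles into the same box in which, for each group, the rectangles of the group are placed side by side forming an axis-aligned rectangular block whose height equals the common height of the group and whose width equals the number of rectangles in the group; in particular, the total area of the blocks equals the total area of the rectangles. -/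
open scoped Classical

/-- Open axis-aligned rectangles (real coordinates) `(x₁, x₁+w₁) × (y₁, y₁+h₁)` and
`(x₂, x₂+w₂) × (y₂, y₂+h₂)` are disjoint. -/
def RectDisjointR (x₁ y₁ w₁ h₁ x₂ y₂ w₂ h₂ : ℝ) : Prop :=
  x₁ + w₁ ≤ x₂ ∨ x₂ + w₂ ≤ x₁ ∨ y₁ + h₁ ≤ y₂ ∨ y₂ + h₂ ≤ y₁

/-
Round each left edge up to an integer column and cut the box into `d` horizontal slots of height
`h/d`. Since every rectangle is at least `h/d` tall, the slot of its bottom edge determines it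
within its column, and the rectangles of one column are ordered by slot. Letting every rectangle
fall to the bottom of its column only lowers it. A column is then described by its profile, the
height of its rectangle in each slot (`0` for none), and there are at most `(q+1)^d` profiles.
Sorting the columns by profile puts columns of equal profile side by side; the rectangles in a
fixed slot of such a run of columns have equal heights and equal new levels, so they form one
block. This gives at most `d·(q+1)^d` blocks.
-/

open Finset

theorem RectDisjointR.vertical_of_abs_sub_lt {x₁ y₁ h₁ x₂ y₂ h₂ w : ℝ}
    (hdisj : RectDisjointR x₁ y₁ w h₁ x₂ y₂ w h₂) (hx : |x₁ - x₂| < w) :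
    y₁ + h₁ ≤ y₂ ∨ y₂ + h₂ ≤ y₁ := by
  rw [abs_lt] at hx
  rcases hdisj with h | h | h | h
  · exact absurd h (by linarith)
  · exact absurd h (by linarith)
  · exact Or.inl h
  · exact Or.inr h

theorem Nat.floor_div_lt_floor_div_of_add_le {a b δ : ℝ} (ha : 0 ≤ a) (hδ : 0 < δ)
    (hab : a + δ ≤ b) : ⌊a / δ⌋₊ < ⌊b / δ⌋₊ := by
  have h : a / δ + 1 ≤ b / δ := by
    rw [div_add_one hδ.ne']
    gcongr
  calc ⌊a / δ⌋₊ < ⌊a / δ⌋₊ + 1 := Nat.lt_succ_self _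
    _ = ⌊a / δ + 1⌋₊ := (Nat.floor_add_one (by positivity)).symm
    _ ≤ ⌊b / δ⌋₊ := Nat.floor_le_floor h

theorem sum_le_sub_of_pairwiseDisjoint_Ioo {κ : Type*} {s : Finset κ} {a l : κ → ℝ} {lo hi : ℝ}
    (hl : ∀ j ∈ s, 0 ≤ l j) (hsub : ∀ j ∈ s, lo ≤ a j ∧ a j + l j ≤ hi) (hlohi : lo ≤ hi)
    (hdisj : (s : Set κ).PairwiseDisjoint fun j => Set.Ioo (a j) (a j + l j)) :
    ∑ j ∈ s, l j ≤ hi - lo := by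
  open MeasureTheory in
  have hvol : volume (⋃ j ∈ s, Set.Ioo (a j) (a j + l j)) ≤ volume (Set.Ioo lo hi) :=
    measure_mono <| Set.iUnion₂_subset fun j hj =>
      Set.Ioo_subset_Ioo (hsub j hj).1 (hsub j hj).2
  rw [measure_biUnion_finset hdisj fun _ _ => measurableSet_Ioo] at hvol
  simp only [Real.volume_Ioo, add_sub_cancel_left] at hvol
  rwa [← ENNReal.ofReal_sum_of_nonneg hl, ENNReal.ofReal_le_ofReal_iff (by linarith)] at hvol

theorem sum_Iio_add_le_sum_Iio {α M : Type*} [LinearOrder α] [LocallyFiniteOrderBot α]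
    [AddCommMonoid M] [PartialOrder M] [IsOrderedAddMonoid M] {p : α → M} (hp : ∀ a, 0 ≤ p a)
    {s t : α} (hst : s < t) : ∑ u ∈ Iio s, p u + p s ≤ ∑ u ∈ Iio t, p u := by
  rw [add_comm, ← sum_insert notMem_Iio_self, Iio_insert]
  refine sum_le_sum_of_subset_of_nonneg (fun u hu => ?_) fun u _ _ => hp u
  simp only [mem_Iic, mem_Iio] at hu ⊢
  exact hu.trans_lt hst

theorem exists_column_slot_of_packing {ι : Type*} {d wbar : ℕ} (hd : 0 < d) {h : ℝ}
    (hh : 0 < h) {ht x y : ι → ℝ} (hht : ∀ i, 0 < ht i ∧ h / d ≤ ht i)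
    (hin : ∀ i, 0 ≤ x i ∧ x i + 1 ≤ wbar ∧ 0 ≤ y i ∧ y i + ht i ≤ h)
    (hdisj : Pairwise fun i j => RectDisjointR (x i) (y i) 1 (ht i) (x j) (y j) 1 (ht j)) :
    ∃ (col : ι → Fin wbar) (slot : ι → Fin d), Function.Injective (fun i => (col i, slot i)) ∧
      ∀ i j, col i = col j → slot i < slot j → y i + ht i ≤ y j := by
  have hδ : 0 < h / d := by positivity
  have hcol (i : ι) : ⌈x i⌉₊ < wbar := by
    have := Nat.ceil_lt_add_one (hin i).1
    exact_mod_cast this.trans_le (hin i).2.1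
  have hslot (i : ι) : ⌊y i / (h / d)⌋₊ < d := by
    refine (Nat.floor_lt (div_nonneg (hin i).2.2.1 hδ.le)).2 ?_
    rw [div_lt_iff₀ hδ, mul_div_cancel₀ _ (by positivity)]
    linarith [hin i, hht i]
  have hsep (i j : ι) (hij : i ≠ j) (hc : ⌈x i⌉₊ = ⌈x j⌉₊) :
      y i + ht i ≤ y j ∨ y j + ht j ≤ y i := by
    refine (hdisj hij).vertical_of_abs_sub_lt (abs_sub_lt_iff.2 ⟨?_, ?_⟩) <;>
      linarith [Nat.le_ceil (x i), Nat.le_ceil (x j), Nat.ceil_lt_add_one (hin i).1,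
        Nat.ceil_lt_add_one (hin j).1, congrArg (Nat.cast (R := ℝ)) hc]
  have hmono (i j : ι) (hij : y i + ht i ≤ y j) : ⌊y i / (h / d)⌋₊ < ⌊y j / (h / d)⌋₊ :=
    Nat.floor_div_lt_floor_div_of_add_le (hin i).2.2.1 hδ (by linarith [hht i])
  refine ⟨fun i => ⟨⌈x i⌉₊, hcol i⟩, fun i => ⟨⌊y i / (h / d)⌋₊, hslot i⟩, ?_, ?_⟩
  · intro i j hij
    simp only [Prod.mk.injEq, Fin.mk.injEq] at hij
    by_contra hne
    rcases hsep i j hne hij.1 with hb | hb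
    · exact (hmono i j hb).ne hij.2
    · exact (hmono j i hb).ne hij.2.symm
  · intro i j hc hs
    simp only [Fin.mk.injEq, Fin.mk_lt_mk] at hc hs
    rcases hsep i j (by rintro rfl; exact hs.false) hc with hb | hb
    · exact hb
    · exact absurd (hmono j i hb) hs.not_gt

theorem Finset.card_filter_lt_card_filter {α : Type*} [Fintype α] {p q : α → Prop}
    [DecidablePred p] [DecidablePred q] (hpq : ∀ a, p a → q a) {a : α} (hq : q a) (hp : ¬p a) :
    #{x | p x} < #{x | q x} :=
  card_lt_card <| (ssubset_iff_of_subset (monotone_filter_right _ fun a _ => hpq a)).2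
    ⟨a, by simpa using hq, by simpa using hp⟩

section SortedPosition

variable {α β : Type*} [Fintype α] [LinearOrder α] [LinearOrder β] (f : α → β)

def sortedPos (a : α) : ℕ := #{a' | toLex (f a', a') < toLex (f a, a)}

def blockStart (b : β) : ℕ := #{a | f a < b}

theorem sortedPos_eq (a : α) :
    sortedPos f a = blockStart f (f a) + #{a' | f a' = f a ∧ a' < a} := by
  rw [blockStart, ← card_union_of_disjoint (disjoint_filter.2 fun _ _ hlt heq => hlt.ne heq.1),
    ← filter_or]
  simp only [sortedPos, Prod.Lex.toLex_lt_toLex]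

theorem sortedPos_lt_card (a : α) : sortedPos f a < Fintype.card α :=
  card_lt_univ_of_notMem (x := a) (by simp)

theorem sortedPos_lt_sortedPos {a b : α} (hab : toLex (f a, a) < toLex (f b, b)) :
    sortedPos f a < sortedPos f b :=
  card_filter_lt_card_filter (fun _ h => h.trans hab) hab (lt_irrefl _)

theorem sortedPos_injective : Function.Injective (sortedPos f) := by
  intro a b hab
  by_contra hne
  have hkey : toLex (f a, a) ≠ toLex (f b, b) := fun h =>
    hne (congrArg Prod.snd (toLex.injective h))
  rcases hkey.lt_or_gt with hlt | hlt
  · exact (sortedPos_lt_sortedPos f hlt).ne hab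
  · exact (sortedPos_lt_sortedPos f hlt).ne' hab

theorem blockStart_le_sortedPos (a : α) : blockStart f (f a) ≤ sortedPos f a := by
  rw [sortedPos_eq]
  exact Nat.le_add_right _ _

theorem sortedPos_lt_blockStart_add_card (a : α) :
    sortedPos f a < blockStart f (f a) + #{a' | f a' = f a} := by
  rw [sortedPos_eq]
  exact Nat.add_lt_add_left
    (card_filter_lt_card_filter (q := fun a' => f a' = f a) (fun _ h => h.1) rfl (by simp)) _

end SortedPosition

theorem exists_code_lt_of_card_image_le {ι β : Type*} [Fintype ι] [DecidableEq β] {g : ι → β}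
    {n : ℕ} (hn : #(univ.image g) ≤ n) :
    ∃ c : ι → ℕ, (∀ i, c i < n) ∧ ∀ i j, c i = c j ↔ g i = g j := by
  let e := (univ.image g).equivFin
  refine ⟨fun i => e ⟨g i, mem_image_of_mem g (mem_univ i)⟩, fun i => (Fin.isLt _).trans_le hn,
    fun i j => ?_⟩
  rw [Fin.val_inj, e.apply_eq_iff_eq, Subtype.mk.injEq]

section Stacking

variable {ι κ σ : Type*} [Fintype ι] [LinearOrder σ] (col : ι → κ) (slot : ι → σ) (ht : ι → ℝ)

-- Once `(col, slot)` is injective a cell holds at most one rectangle, so this sum is the height of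
-- that rectangle, or `0` for an empty cell.
noncomputable def cellHeight (k : κ) (s : σ) : ℝ := ∑ j with col j = k ∧ slot j = s, ht j

noncomputable def stackHeight [LocallyFiniteOrderBot σ] (k : κ) (s : σ) : ℝ :=
  ∑ t ∈ Iio s, cellHeight col slot ht k t

noncomputable def profileKey (k : κ) : Lex (σ → ℝ) := toLex (cellHeight col slot ht k)

noncomputable def groupKey (i : ι) : σ × (σ → ℝ) := (slot i, cellHeight col slot ht (col i))

variable {col slot ht}

theorem cellHeight_self (hinj : Function.Injective fun i => (col i, slot i)) (i : ι) :
    cellHeight col slot ht (col i) (slot i) = ht i := by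
  rw [cellHeight, sum_eq_single_of_mem i (by simp)]
  intro j hj hji
  exact absurd (hinj (Prod.ext (mem_filter.1 hj).2.1 (mem_filter.1 hj).2.2)) hji

theorem cellHeight_nonneg (hht : ∀ i, 0 ≤ ht i) (k : κ) (s : σ) : 0 ≤ cellHeight col slot ht k s :=
  sum_nonneg fun j _ => hht j

theorem exists_of_cellHeight_ne_zero {k : κ} {s : σ} (h : cellHeight col slot ht k s ≠ 0) :
    ∃ i, col i = k ∧ slot i = s := by
  obtain ⟨i, hi, -⟩ := exists_ne_zero_of_sum_ne_zero h
  exact ⟨i, (mem_filter.1 hi).2⟩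

theorem cellHeight_mem (hinj : Function.Injective fun i => (col i, slot i)) (k : κ) (s : σ) :
    cellHeight col slot ht k s ∈ insert 0 (univ.image ht) := by
  by_cases h0 : cellHeight col slot ht k s = 0
  · rw [h0]
    exact mem_insert_self 0 _
  · obtain ⟨i, rfl, rfl⟩ := exists_of_cellHeight_ne_zero h0
    rw [cellHeight_self hinj]
    exact mem_insert_of_mem (mem_image_of_mem ht (mem_univ i))

variable [LocallyFiniteOrderBot σ]

theorem stackHeight_eq_sum (k : κ) (s : σ) :
    stackHeight col slot ht k s = ∑ j with col j = k ∧ slot j < s, ht j := by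
  rw [← sum_fiberwise_of_maps_to (g := slot) (t := Iio s)
    fun j hj => by simpa using (mem_filter.1 hj).2.2]
  refine sum_congr rfl fun t hts => ?_
  rw [cellHeight, filter_filter]
  refine sum_congr (filter_congr fun j _ => ?_) fun _ _ => rfl
  constructor
  · rintro ⟨rfl, rfl⟩; exact ⟨⟨rfl, by simpa using hts⟩, rfl⟩
  · rintro ⟨⟨rfl, -⟩, rfl⟩; exact ⟨rfl, rfl⟩

theorem stackHeight_add_le (hinj : Function.Injective fun i => (col i, slot i))
    (hht : ∀ i, 0 ≤ ht i) {i j : ι} (hcol : col i = col j) (hslot : slot i < slot j) :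
    stackHeight col slot ht (col i) (slot i) + ht i ≤ stackHeight col slot ht (col j) (slot j) := by
  rw [← hcol, ← cellHeight_self (ht := ht) hinj i]
  exact sum_Iio_add_le_sum_Iio (cellHeight_nonneg hht _) hslot

theorem stackHeight_le {y : ι → ℝ} (hinj : Function.Injective fun i => (col i, slot i))
    (hht : ∀ i, 0 ≤ ht i) (hy : ∀ i, 0 ≤ y i)
    (hbelow : ∀ i j, col i = col j → slot i < slot j → y i + ht i ≤ y j) (i : ι) :
    stackHeight col slot ht (col i) (slot i) ≤ y i := by
  rw [stackHeight_eq_sum, ← sub_zero (y i)]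
  refine sum_le_sub_of_pairwiseDisjoint_Ioo (fun j _ => hht j)
    (fun j hj => ⟨hy j, hbelow j i (mem_filter.1 hj).2.1 (mem_filter.1 hj).2.2⟩) (hy i) ?_
  intro j hj j' hj' hne
  have hcol : col j = col j' := (mem_filter.1 hj).2.1.trans (mem_filter.1 hj').2.1.symm
  have hslot : slot j ≠ slot j' := fun h => hne (hinj (Prod.ext hcol h))
  rcases hslot.lt_or_gt with hlt | hlt
  · exact Set.Ioo_disjoint_Ioo.2 (by simp [hbelow j j' hcol hlt])
  · exact Set.Ioo_disjoint_Ioo.2 (by simp [hbelow j' j hcol.symm hlt])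

end Stacking

section Regrouping

variable {ι κ σ : Type*} [Fintype ι] [LinearOrder σ] {col : ι → κ} {slot : ι → σ} {ht : ι → ℝ}

theorem card_image_groupKey_le [Fintype σ] (hinj : Function.Injective fun i => (col i, slot i)) :
    #(univ.image (groupKey col slot ht)) ≤
      Fintype.card σ * (#(univ.image ht) + 1) ^ Fintype.card σ := by
  calc #(univ.image (groupKey col slot ht))
      ≤ #((univ : Finset σ) ×ˢ Fintype.piFinset fun _ => insert 0 (univ.image ht)) := by
        refine card_le_card fun p hp => ?_
        obtain ⟨i, -, rfl⟩ := mem_image.1 hp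
        exact mem_product.2 ⟨mem_univ _, Fintype.mem_piFinset.2 (cellHeight_mem hinj _)⟩
    _ ≤ Fintype.card σ * (#(univ.image ht) + 1) ^ Fintype.card σ := by
        rw [card_product, Fintype.card_piFinset, prod_const, card_univ]
        exact Nat.mul_le_mul_left _ (Nat.pow_le_pow_left (card_insert_le _ _) _)

theorem ht_eq_of_groupKey_eq (hinj : Function.Injective fun i => (col i, slot i)) {i j : ι}
    (h : groupKey col slot ht i = groupKey col slot ht j) : ht i = ht j := by
  simpa only [groupKey, cellHeight_self hinj] using congrArg (fun p => p.2 p.1) h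

theorem stackHeight_eq_of_groupKey_eq [LocallyFiniteOrderBot σ] {i j : ι}
    (h : groupKey col slot ht i = groupKey col slot ht j) :
    stackHeight col slot ht (col i) (slot i) = stackHeight col slot ht (col j) (slot j) :=
  congrArg (fun p : σ × (σ → ℝ) => ∑ t ∈ Iio p.1, p.2 t) h

theorem card_column_class_le [Fintype κ] (hinj : Function.Injective fun i => (col i, slot i))
    (hht : ∀ i, ht i ≠ 0) (i : ι) :
    #{k | cellHeight col slot ht k = cellHeight col slot ht (col i)} ≤
      #{j | groupKey col slot ht j = groupKey col slot ht i} := by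
  refine card_le_card_of_surjOn col fun k hk => ?_
  have hk : cellHeight col slot ht k = cellHeight col slot ht (col i) := by simpa using hk
  have hcell : cellHeight col slot ht k (slot i) ≠ 0 := by
    rw [hk, cellHeight_self hinj]
    exact hht i
  obtain ⟨j, rfl, hj⟩ := exists_of_cellHeight_ne_zero hcell
  exact ⟨j, by simp [groupKey, hj, hk], rfl⟩

theorem sortedPos_add_one_le_blockStart_add_card [Fintype κ] [LinearOrder κ] [WellFoundedLT σ]
    (hinj : Function.Injective fun i => (col i, slot i)) (hht : ∀ i, ht i ≠ 0) {c : ι → ℕ}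
    (hc : ∀ i j, c i = c j ↔ groupKey col slot ht i = groupKey col slot ht j) (i : ι) :
    sortedPos (profileKey col slot ht) (col i) + 1 ≤
      blockStart (profileKey col slot ht) (profileKey col slot ht (col i)) + #{j | c j = c i} := by
  refine (sortedPos_lt_blockStart_add_card _ (col i)).trans_le (Nat.add_le_add_left ?_ _)
  convert card_column_class_le hinj hht i using 2 <;> ext <;> simp [profileKey, hc]

end Regrouping

theorem rectDisjointR_of_stacked_columns {ι κ σ : Type*} [LinearOrder σ] {col : ι → κ}
    {slot : ι → σ} {ht : ι → ℝ} {px : κ → ℕ} (hpx : Function.Injective px)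
    (hinj : Function.Injective fun i => (col i, slot i)) {y' : ι → ℝ}
    (hstack : ∀ i j, col i = col j → slot i < slot j → y' i + ht i ≤ y' j) {i j : ι} (hij : i ≠ j) :
    RectDisjointR (px (col i)) (y' i) 1 (ht i) (px (col j)) (y' j) 1 (ht j) := by
  by_cases hcol : col i = col j
  · have hslot : slot i ≠ slot j := fun h => hij (hinj (Prod.ext hcol h))
    rcases hslot.lt_or_gt with hlt | hlt
    · exact Or.inr (Or.inr (Or.inl (hstack i j hcol hlt)))
    · exact Or.inr (Or.inr (Or.inr (hstack j i hcol.symm hlt)))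
  · rcases (hpx.ne hcol).lt_or_gt with hlt | hlt
    · exact Or.inl (by exact_mod_cast hlt)
    · exact Or.inr (Or.inl (by exact_mod_cast hlt))

theorem repack_unit_slices_into_containers_general
    (d q : ℕ) (hd : 0 < d)
    (wbar : ℕ) (h : ℝ) (hh : 0 < h)
    (ι : Type*) [Fintype ι] (ht : ι → ℝ)
    (hht : ∀ i, 0 < ht i ∧ h / d ≤ ht i)
    (hqvals : (Finset.univ.image ht).card ≤ q)
    (x y : ι → ℝ)
    (hin : ∀ i, 0 ≤ x i ∧ x i + 1 ≤ wbar ∧ 0 ≤ y i ∧ y i + ht i ≤ h)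
    (hdisj : Pairwise fun i j =>
      RectDisjointR (x i) (y i) 1 (ht i) (x j) (y j) 1 (ht j)) :
    ∃ (n : ℕ) (c : ι → ℕ) (x' y' : ι → ℝ) (X Y : ℕ → ℝ),
      n ≤ d * (q + 1) ^ d ∧
      (∀ i, c i < n) ∧
      (∀ i j, c i = c j → ht i = ht j) ∧
      (∀ i, 0 ≤ x' i ∧ x' i + 1 ≤ wbar ∧ 0 ≤ y' i ∧ y' i + ht i ≤ h) ∧
      (Pairwise fun i j =>
        RectDisjointR (x' i) (y' i) 1 (ht i) (x' j) (y' j) 1 (ht j)) ∧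
      (∀ i, y' i = Y (c i) ∧ X (c i) ≤ x' i ∧
        x' i + 1 ≤ X (c i) + ((Finset.univ.filter (fun j => c j = c i)).card : ℝ)) := by
  obtain ⟨col, slot, hinj, hbelow⟩ := exists_column_slot_of_packing hd hh hht hin hdisj
  have hht₀ (i : ι) : 0 ≤ ht i := (hht i).1.le
  obtain ⟨c, hc_lt, hc_iff⟩ := exists_code_lt_of_card_image_le <|
    (card_image_groupKey_le hinj).trans <| by
      simpa using Nat.mul_le_mul_left d (Nat.pow_le_pow_left (Nat.succ_le_succ hqvals) d)
  have hfactor {γ : Type} {v : ι → γ}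
      (hv : ∀ i j, groupKey col slot ht i = groupKey col slot ht j → v i = v j) :
      Function.FactorsThrough v c := fun i j hij => hv i j ((hc_iff i j).1 hij)
  let x' (i : ι) : ℝ := sortedPos (profileKey col slot ht) (col i)
  let y' (i : ι) : ℝ := stackHeight col slot ht (col i) (slot i)
  let X₀ (i : ι) : ℝ := blockStart (profileKey col slot ht) (profileKey col slot ht (col i))
  have hX := (hfactor (v := X₀) fun i j hij => by
    simp only [X₀, show profileKey col slot ht (col i) = profileKey col slot ht (col j) from
      congrArg (fun p => toLex p.2) hij]).extend_apply 0
  have hY := (hfactor (v := y') fun i j hij => stackHeight_eq_of_groupKey_eq hij).extend_apply 0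
  refine ⟨_, c, x', y', Function.extend c X₀ 0, Function.extend c y' 0, le_rfl, hc_lt,
    fun i j hij => ht_eq_of_groupKey_eq hinj ((hc_iff i j).1 hij), fun i => ⟨?_, ?_, ?_, ?_⟩,
    fun i j hij => rectDisjointR_of_stacked_columns (sortedPos_injective _) hinj
      (fun i j => stackHeight_add_le hinj hht₀) hij, fun i => ⟨(hY i).symm, ?_, ?_⟩⟩
  · exact Nat.cast_nonneg _
  · simpa [x'] using Nat.cast_le.2 (sortedPos_lt_card (profileKey col slot ht) (col i))
  · exact sum_nonneg fun _ _ => cellHeight_nonneg hht₀ _ _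
  · linarith [stackHeight_le hinj hht₀ (fun i => (hin i).2.2.1) hbelow i, (hin i).2.2.2]
  · simp only [hX, X₀, x']
    exact_mod_cast blockStart_le_sortedPos (profileKey col slot ht) (col i)
  · simp only [hX, X₀, x']
    exact_mod_cast sortedPos_add_one_le_blockStart_add_card hinj (fun i => (hht i).1.ne') hc_iff i

/-- Lemma 4.1: a family of unit-width rectangles of height at least `h/d`, with at most
`q` distinct heights, packed in a box `[0,w̄]×[0,h]`, can be repacked into the same box in
at most `d·(q+1)^d` groups, each group consisting of rectangles of one common height placed
side by side forming a rectangular block of that height whose width equals the number of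
rectangles in the group (so the blocks are vertical containers whose total area equals the
total area of the rectangles). -/
theorem repack_unit_slices_into_containers
    (d q : ℕ) (hd : 0 < d) (hq : 0 < q)
    (wbar : ℕ) (hwbar : 0 < wbar) (h : ℝ) (hh : 0 < h)
    (ι : Type*) [Fintype ι] (ht : ι → ℝ)
    (hht : ∀ i, 0 < ht i ∧ h / d ≤ ht i)
    (hqvals : (Finset.univ.image ht).card ≤ q)
    (x y : ι → ℝ)
    (hin : ∀ i, 0 ≤ x i ∧ x i + 1 ≤ wbar ∧ 0 ≤ y i ∧ y i + ht i ≤ h)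
    (hdisj : Pairwise fun i j =>
      RectDisjointR (x i) (y i) 1 (ht i) (x j) (y j) 1 (ht j)) :
    ∃ (n : ℕ) (c : ι → ℕ) (x' y' : ι → ℝ) (X Y : ℕ → ℝ),
      n ≤ d * (q + 1) ^ d ∧
      (∀ i, c i < n) ∧
      (∀ i j, c i = c j → ht i = ht j) ∧
      (∀ i, 0 ≤ x' i ∧ x' i + 1 ≤ wbar ∧ 0 ≤ y' i ∧ y' i + ht i ≤ h) ∧
      (Pairwise fun i j =>
        RectDisjointR (x' i) (y' i) 1 (ht i) (x' j) (y' j) 1 (ht j)) ∧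
      (∀ i, y' i = Y (c i) ∧ X (c i) ≤ x' i ∧
        x' i + 1 ≤ X (c i) + ((Finset.univ.filter (fun j => c j = c i)).card : ℝ)) :=
  repack_unit_slices_into_containers_general d q hd wbar h hh ι ht hht hqvals x y hin hdisj
end

section
/- Let R_1,…,R_m be rectangles with positive integer heights h_1,…,h_m and widths w_1,…,w_m, and let C_1,…,C_t be containers with heights H_1,…,H_t and widths W_1,…,W_t. Suppose there is a feasible sliced assignment, i.e., nonnegative integers s_{ij} (1 ≤ i ≤ m, 1 ≤ j ≤ t) with ∑_{j=1}^t s_{ij} = h_i for every i, with w_i ≤ W_j whenever s_{ij} > 0, and with ∑_{i=1}^m s_{ij} ≤ H_j for every j. Then there exist a subset I ⊆ {1,…,m} with |{1,…,m} ∖ I| ≤ t and a map σ : I → {1,…,t} such that w_i ≤ W_{σ(i)} for every i ∈ I and, for every j, ∑_{i ∈ I, σ(i)=j} h_i ≤ H_j. -/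
/-!
Only a Hall-type consequence of the sliced packing is used: for every `x`, the rectangles of width
at least `x` have total height at most the total height of the containers of width at least `x`.

Induct on the containers, narrowest first. If the rectangles that are narrow enough for the
narrowest container `c` also fit into it by height, put them all there; the remaining rectangles
are wider than `c`, so the condition survives the removal of `c`. Otherwise put some of them into
`c` until the next one, `r`, overflows it, and discard `r`: more than the height of `c` has been
removed, and since every other container is at least as wide as `c`, this gives the condition at
thresholds `x ≤ W c`, while at thresholds `x > W c` it is inherited. At most one rectangle is
discarded per container.
-/

open Finset

variable {ι κ : Type*}

def IsIntegralPacking [DecidableEq κ] (h w : ι → ℕ) (H W : κ → ℕ) (I : Finset ι) (C : Finset κ)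
    (σ : ι → κ) : Prop :=
  (∀ i ∈ I, σ i ∈ C ∧ w i ≤ W (σ i)) ∧ ∀ j ∈ C, ∑ i ∈ I with σ i = j, h i ≤ H j

def IsWidthFeasible (h w : ι → ℕ) (H W : κ → ℕ) (R : Finset ι) (C : Finset κ) : Prop :=
  ∀ x, ∑ i ∈ R with x ≤ w i, h i ≤ ∑ j ∈ C with x ≤ W j, H j

theorem isWidthFeasible_of_sliced [Fintype ι] [Fintype κ] {h w : ι → ℕ} {H W : κ → ℕ}
    (s : ι → κ → ℕ) (hs_sum : ∀ i, ∑ j, s i j = h i) (hs_width : ∀ i j, 0 < s i j → w i ≤ W j)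
    (hs_cap : ∀ j, ∑ i, s i j ≤ H j) : IsWidthFeasible h w H W univ univ := by
  intro x
  calc ∑ i with x ≤ w i, h i = ∑ j, ∑ i with x ≤ w i, s i j := by
        rw [sum_comm]; exact sum_congr rfl fun i _ => (hs_sum i).symm
    _ = ∑ j with x ≤ W j, ∑ i with x ≤ w i, s i j := by
        refine (sum_filter_of_ne fun j _ hj => ?_).symm
        obtain ⟨i, hi, hsij⟩ := exists_ne_zero_of_sum_ne_zero hj
        exact (mem_filter.1 hi).2.trans (hs_width i j (Nat.pos_of_ne_zero hsij))
    _ ≤ ∑ j with x ≤ W j, H j :=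
        sum_le_sum fun j _ => (sum_le_sum_of_subset (filter_subset _ _)).trans (hs_cap j)

theorem exists_subset_sum_le_lt_add [DecidableEq ι] (f : ι → ℕ) {b : ℕ} {N : Finset ι}
    (hb : b < ∑ i ∈ N, f i) :
    ∃ P ⊆ N, ∃ r ∈ N \ P, ∑ i ∈ P, f i ≤ b ∧ b < ∑ i ∈ P, f i + f r := by
  induction N using Finset.induction_on with
  | empty => simp at hb
  | insert a N ha ih =>
    rw [sum_insert ha] at hb
    by_cases hN : b < ∑ i ∈ N, f i
    · obtain ⟨P, hPN, r, hr, hPb, hbPr⟩ := ih hN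
      exact ⟨P, hPN.trans (subset_insert _ _), r,
        sdiff_subset_sdiff (subset_insert _ _) le_rfl hr, hPb, hbPr⟩
    · exact ⟨N, subset_insert _ _, a, by simp [ha], by omega, by omega⟩

variable {h w : ι → ℕ} {H W : κ → ℕ} {R I P D : Finset ι} {C : Finset κ} {c : κ} {σ : ι → κ}

namespace IsWidthFeasible

theorem eq_empty (hf : IsWidthFeasible h w H W R ∅) (hh : ∀ i ∈ R, 0 < h i) : R = ∅ := by
  have := hf 0
  simp only [zero_le, filter_true, filter_empty, sum_empty, nonpos_iff_eq_zero,
    sum_eq_zero_iff] at this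
  exact eq_empty_of_forall_notMem fun i hi => (hh i hi).ne' (this i hi)

theorem filter_width_gt [DecidableEq κ] (hf : IsWidthFeasible h w H W R (insert c C)) :
    IsWidthFeasible h w H W (R.filter (W c < w ·)) C := by
  intro x
  have hy := hf (max x (W c + 1))
  rw [filter_insert, if_neg (by omega)] at hy
  calc ∑ i ∈ R.filter (W c < w ·) with x ≤ w i, h i
        = ∑ i ∈ R with max x (W c + 1) ≤ w i, h i := by
          rw [filter_filter]; congr 1; ext i
          simp only [mem_filter, max_le_iff, Nat.add_one_le_iff]; tauto
    _ ≤ ∑ j ∈ C with max x (W c + 1) ≤ W j, H j := hy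
    _ ≤ ∑ j ∈ C with x ≤ W j, H j :=
          sum_le_sum_of_subset (monotone_filter_right _ fun _ _ => (le_max_left _ _).trans)

theorem sdiff [DecidableEq ι] [DecidableEq κ] (hf : IsWidthFeasible h w H W R (insert c C))
    (hc : c ∉ C) (hmin : ∀ j ∈ C, W c ≤ W j) (hDR : D ⊆ R) (hDh : H c < ∑ i ∈ D, h i) :
    IsWidthFeasible h w H W (R \ D) C := by
  intro x
  by_cases hx : W c < x
  · have hRx := hf x
    rw [filter_insert, if_neg (by omega)] at hRx
    exact (sum_le_sum_of_subset (filter_subset_filter _ sdiff_subset)).trans hRx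
  · have htotal := hf 0
    simp only [zero_le, filter_true, sum_insert hc] at htotal
    rw [filter_true_of_mem fun j hj => (not_lt.1 hx).trans (hmin j hj)]
    have hsplit := sum_sdiff hDR (f := h)
    calc ∑ i ∈ R \ D with x ≤ w i, h i ≤ ∑ i ∈ R \ D, h i :=
          sum_le_sum_of_subset (filter_subset _ _)
      _ ≤ ∑ j ∈ C, H j := by omega

end IsWidthFeasible

theorem IsIntegralPacking.union [DecidableEq ι] [DecidableEq κ]
    (hσ : IsIntegralPacking h w H W I C σ) (hc : c ∉ C) (hPI : Disjoint P I)
    (hPw : ∀ i ∈ P, w i ≤ W c) (hPh : ∑ i ∈ P, h i ≤ H c) :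
    IsIntegralPacking h w H W (P ∪ I) (insert c C) (fun i => if i ∈ P then c else σ i) := by
  have hσc : ∀ i ∈ I, σ i ≠ c := fun i hi hic => hc (hic ▸ (hσ.1 i hi).1)
  constructor
  · intro i hi
    by_cases hiP : i ∈ P
    · simp [hiP, hPw i hiP]
    · have hiI : i ∈ I := by simpa [hiP] using hi
      simp [hiP, hσ.1 i hiI]
  · intro j hj
    rcases mem_insert.1 hj with rfl | hj
    · convert hPh using 2
      ext i
      by_cases hiP : i ∈ P
      · simp [hiP]
      · simpa [hiP] using hσc i
    · convert hσ.2 j hj using 2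
      ext i
      by_cases hiP : i ∈ P
      · simpa [hiP, disjoint_left.1 hPI hiP] using fun hcj : c = j => hc (hcj ▸ hj)
      · simp [hiP]

theorem IsWidthFeasible.exists_isIntegralPacking [DecidableEq ι] [DecidableEq κ] [Nonempty κ]
    (hh : ∀ i ∈ R, 0 < h i) (hf : IsWidthFeasible h w H W R C) :
    ∃ I ⊆ R, #(R \ I) ≤ #C ∧ ∃ σ, IsIntegralPacking h w H W I C σ := by
  induction C using Finset.induction_on_min_value W generalizing R with
  | empty =>
    obtain rfl := hf.eq_empty hh
    exact ⟨∅, subset_rfl, by simp, Classical.arbitrary _, by simp [IsIntegralPacking]⟩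
  | insert c C hc hmin ih =>
    rw [card_insert_of_notMem hc]
    by_cases hfit : ∑ i ∈ R with w i ≤ W c, h i ≤ H c
    · obtain ⟨I, hIR, hcard, σ, hσ⟩ :=
        ih (fun i hi => hh i (mem_filter.1 hi).1) hf.filter_width_gt
      have hdisj : Disjoint (R.filter (w · ≤ W c)) I :=
        disjoint_left.2 fun i hi hiI => by
          have := (mem_filter.1 (hIR hiI)).2; simp only [mem_filter] at hi; omega
      refine ⟨_ ∪ I, union_subset (filter_subset _ _) (hIR.trans (filter_subset _ _)), ?_, _,
        hσ.union hc hdisj (fun i hi => (mem_filter.1 hi).2) hfit⟩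
      calc #(R \ (R.filter (w · ≤ W c) ∪ I)) ≤ #(R.filter (W c < w ·) \ I) :=
            card_le_card fun i hi => by
              simp only [mem_sdiff, mem_union, mem_filter, not_or, not_and, not_le] at hi ⊢
              exact ⟨⟨hi.1, hi.2.1 hi.1⟩, hi.2.2⟩
        _ ≤ #C + 1 := le_add_right hcard
    · push Not at hfit
      obtain ⟨P, hPN, r, hr, hPh, hPrh⟩ := exists_subset_sum_le_lt_add h hfit
      obtain ⟨hrN, hrP⟩ := mem_sdiff.1 hr
      have hPR : P ⊆ R := hPN.trans (filter_subset _ _)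
      have hDR : insert r P ⊆ R := insert_subset (mem_filter.1 hrN).1 hPR
      have hDh : H c < ∑ i ∈ insert r P, h i := by rwa [sum_insert hrP, add_comm]
      obtain ⟨I, hIR, hcard, σ, hσ⟩ :=
        ih (fun i hi => hh i (mem_sdiff.1 hi).1) (hf.sdiff hc hmin hDR hDh)
      have hdisj : Disjoint P I :=
        disjoint_left.2 fun i hi hiI => (mem_sdiff.1 (hIR hiI)).2 (mem_insert_of_mem hi)
      refine ⟨P ∪ I, union_subset hPR (hIR.trans sdiff_subset), ?_, _,
        hσ.union hc hdisj (fun i hi => (mem_filter.1 (hPN hi)).2) hPh⟩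
      calc #(R \ (P ∪ I)) ≤ #(insert r ((R \ insert r P) \ I)) :=
            card_le_card fun i hi => by
              simp only [mem_sdiff, mem_union, mem_insert, not_or] at hi ⊢; tauto
        _ ≤ #C + 1 := (card_insert_le _ _).trans (Nat.succ_le_succ hcard)

/-- Lemma 4.2 (sliced-to-integral packing): if rectangles `R_1,…,R_m` can be assigned to
containers `C_1,…,C_t` when slicing into unit-height strips is allowed (`s i j` units of
rectangle `i` go to container `j`), then all but at most `t` of the rectangles can be packed
integrally into the same containers. -/
theorem sliced_to_integral_packing
    (m t : ℕ)
    (h w : Fin m → ℕ) (hpos : ∀ i, 0 < h i ∧ 0 < w i)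
    (Hc Wc : Fin t → ℕ)
    (s : Fin m → Fin t → ℕ)
    (hs1 : ∀ i, ∑ j, s i j = h i)
    (hs2 : ∀ i j, 0 < s i j → w i ≤ Wc j)
    (hs3 : ∀ j, ∑ i, s i j ≤ Hc j) :
    ∃ (I : Finset (Fin m)) (σ : Fin m → Fin t),
      (Finset.univ \ I).card ≤ t ∧
      (∀ i ∈ I, w i ≤ Wc (σ i)) ∧
      (∀ j, ∑ i ∈ I.filter (fun i => σ i = j), h i ≤ Hc j) := by
  rcases isEmpty_or_nonempty (Fin t) with _ | _
  · have : IsEmpty (Fin m) := ⟨fun i => (hpos i).1.ne' (by simp [← hs1 i])⟩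
    exact ⟨∅, isEmptyElim, by simp, by simp, by simp⟩
  obtain ⟨I, -, hcard, σ, hσ⟩ :=
    (isWidthFeasible_of_sliced s hs1 hs2 hs3).exists_isIntegralPacking fun i _ => (hpos i).1
  exact ⟨I, σ, by simpa using hcard, fun i hi => (hσ.1 i hi).2, fun j => hσ.2 j (mem_univ j)⟩
end
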